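/- Let Σ, Σ̂ be symmetric positive semidefinite d×d matrices, λ > 0, Σ_λ = Σ + λI, Σ̂_λ = Σ̂ + λI, and Δ = Σ_λ^{-1/2}(Σ̂ − Σ)Σ_λ^{-1/2} with ‖Δ‖ < 1. If A ∈ ℝ^{d×n} satisfies (1/n)AAᵀ = Σ̂ and M := (1/n²)Aᵀ Σ̂_λ^{-1} Σ Σ̂_λ^{-1} A, then ‖M‖ ≤ 1/(n(1 − ‖Δ‖)). -/

import Mathlib

open Matrix

/-- The square root of a positive semidefinite matrix, as `Matrix.PosSemidef.sqrt` was
defined in Mathlib (Dec 2024); it has since been removed. -/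
noncomputable def Matrix.PosSemidef.sqrt {n : Type*} [Fintype n] [DecidableEq n]
    {A : Matrix n n ℝ} (hA : A.PosSemidef) : Matrix n n ℝ :=
  hA.1.eigenvectorUnitary.1 * diagonal ((↑) ∘ (√·) ∘ hA.1.eigenvalues) *
    (star hA.1.eigenvectorUnitary : Matrix n n ℝ)

noncomputable def matSpectralNorm {m : Type*} [Fintype m] [DecidableEq m]
    (A : Matrix m m ℝ) : ℝ := ‖Matrix.toEuclideanCLM (𝕜 := ℝ) A‖

theorem Matrix.PosSemidef.posSemidef_sqrt {n : Type*} [Fintype n] [DecidableEq n]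
    {A : Matrix n n ℝ} (hA : A.PosSemidef) : hA.sqrt.PosSemidef := by
  unfold Matrix.PosSemidef.sqrt
  have hd : (diagonal ((↑) ∘ (√·) ∘ hA.1.eigenvalues) : Matrix n n ℝ).PosSemidef :=
    PosSemidef.diagonal (by intro i; simp [Real.sqrt_nonneg])
  have := hd.mul_mul_conjTranspose_same (hA.1.eigenvectorUnitary : Matrix n n ℝ)
  rwa [← Matrix.star_eq_conjTranspose] at this

theorem Matrix.PosSemidef.sqrt_mul_self {n : Type*} [Fintype n] [DecidableEq n]
    {A : Matrix n n ℝ} (hA : A.PosSemidef) : hA.sqrt * hA.sqrt = A := by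
  unfold Matrix.PosSemidef.sqrt
  have hU : (star hA.1.eigenvectorUnitary : Matrix n n ℝ) * hA.1.eigenvectorUnitary.1 = 1 := by
    simp
  calc hA.1.eigenvectorUnitary.1 * diagonal ((↑) ∘ (√·) ∘ hA.1.eigenvalues) *
        (star hA.1.eigenvectorUnitary : Matrix n n ℝ) *
        (hA.1.eigenvectorUnitary.1 * diagonal ((↑) ∘ (√·) ∘ hA.1.eigenvalues) *
        (star hA.1.eigenvectorUnitary : Matrix n n ℝ))
      = hA.1.eigenvectorUnitary.1 * (diagonal ((↑) ∘ (√·) ∘ hA.1.eigenvalues) *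
        ((star hA.1.eigenvectorUnitary : Matrix n n ℝ) * hA.1.eigenvectorUnitary.1) *
        diagonal ((↑) ∘ (√·) ∘ hA.1.eigenvalues)) *
        (star hA.1.eigenvectorUnitary : Matrix n n ℝ) := by simp only [Matrix.mul_assoc]
    _ = hA.1.eigenvectorUnitary.1 * diagonal hA.1.eigenvalues *
        (star hA.1.eigenvectorUnitary : Matrix n n ℝ) := by
      rw [hU, Matrix.mul_one, diagonal_mul_diagonal]
      congr 3
      funext i
      simp [Real.mul_self_sqrt (hA.eigenvalues_nonneg i)]
    _ = A := by
      conv_rhs => rw [hA.1.spectral_theorem, Unitary.conjStarAlgAut_apply]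
      simp

open scoped Matrix.Norms.L2Operator

section Aux

variable {m n : Type*} [Fintype m] [Fintype n] [DecidableEq m] [DecidableEq n]

set_option linter.unusedSectionVars false in
lemma aux_norm_le_sqrt (B : Matrix m n ℝ) (c : ℝ) (hc : 0 ≤ c)
    (h : (c • (1 : Matrix n n ℝ) - Bᴴ * B).PosSemidef) : ‖B‖ ≤ Real.sqrt c := by
  rw [Matrix.l2_opNorm_def]
  refine ContinuousLinearMap.opNorm_le_bound _ (Real.sqrt_nonneg c) fun x => ?_
  show ‖(WithLp.equiv 2 (m → ℝ)).symm (B *ᵥ (WithLp.equiv 2 (n → ℝ) x))‖ ≤ Real.sqrt c * ‖x‖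
  set v : n → ℝ := WithLp.equiv 2 _ x with hv
  have hxv : x = (WithLp.equiv 2 (n → ℝ)).symm v := rfl
  have hq : 0 ≤ v ⬝ᵥ ((c • (1 : Matrix n n ℝ) - Bᴴ * B) *ᵥ v) := by
    simpa using h.dotProduct_mulVec_nonneg v
  have hexp : v ⬝ᵥ ((c • (1 : Matrix n n ℝ) - Bᴴ * B) *ᵥ v)
      = c * (v ⬝ᵥ v) - (B *ᵥ v) ⬝ᵥ (B *ᵥ v) := by
    rw [Matrix.sub_mulVec, dotProduct_sub]
    congr 1
    · rw [Matrix.smul_mulVec, Matrix.one_mulVec, dotProduct_smul, smul_eq_mul]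
    · rw [← Matrix.mulVec_mulVec, Matrix.dotProduct_mulVec,
        Matrix.conjTranspose_eq_transpose_of_trivial, Matrix.vecMul_transpose]
  have hsq : (B *ᵥ v) ⬝ᵥ (B *ᵥ v) ≤ c * (v ⬝ᵥ v) := by
    rw [hexp] at hq; linarith
  have hny : ‖(WithLp.equiv 2 (m → ℝ)).symm (B *ᵥ v)‖ ^ 2 = (B *ᵥ v) ⬝ᵥ (B *ᵥ v) := by
    rw [← real_inner_self_eq_norm_sq, EuclideanSpace.inner_eq_star_dotProduct]
    simp
  have hnx : ‖x‖ ^ 2 = v ⬝ᵥ v := by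
    rw [← real_inner_self_eq_norm_sq, hxv, EuclideanSpace.inner_eq_star_dotProduct]
    simp
  calc ‖(WithLp.equiv 2 (m → ℝ)).symm (B *ᵥ v)‖
      = Real.sqrt (‖(WithLp.equiv 2 (m → ℝ)).symm (B *ᵥ v)‖ ^ 2) :=
        (Real.sqrt_sq (norm_nonneg _)).symm
    _ ≤ Real.sqrt (c * ‖x‖ ^ 2) := by
        apply Real.sqrt_le_sqrt
        rw [hny, hnx]
        exact hsq
    _ = Real.sqrt c * ‖x‖ := by
        rw [Real.sqrt_mul hc, Real.sqrt_sq (norm_nonneg _)]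

lemma aux_psd_norm_le {X : Matrix n n ℝ} (hX : X.PosSemidef) {c : ℝ} (hc : 0 ≤ c)
    (h : (c • (1 : Matrix n n ℝ) - X).PosSemidef) : ‖X‖ ≤ c := by
  have h1 : ‖hX.sqrt‖ ≤ Real.sqrt c := by
    apply aux_norm_le_sqrt _ c hc
    rwa [hX.posSemidef_sqrt.isHermitian.eq, hX.sqrt_mul_self]
  calc ‖X‖ = ‖hX.sqrtᴴ * hX.sqrt‖ := by
        rw [hX.posSemidef_sqrt.isHermitian.eq, hX.sqrt_mul_self]
    _ = ‖hX.sqrt‖ * ‖hX.sqrt‖ := Matrix.l2_opNorm_conjTranspose_mul_self _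
    _ ≤ Real.sqrt c * Real.sqrt c :=
        mul_le_mul h1 h1 (norm_nonneg _) (Real.sqrt_nonneg c)
    _ = c := Real.mul_self_sqrt hc

lemma aux_self_mul_conjTranspose (A : Matrix m n ℝ) : ‖A * Aᴴ‖ = ‖A‖ * ‖A‖ := by
  calc ‖A * Aᴴ‖ = ‖(Aᴴ)ᴴ * Aᴴ‖ := by rw [Matrix.conjTranspose_conjTranspose]
    _ = ‖Aᴴ‖ * ‖Aᴴ‖ := Matrix.l2_opNorm_conjTranspose_mul_self _
    _ = ‖A‖ * ‖A‖ := by rw [Matrix.l2_opNorm_conjTranspose]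

set_option linter.unusedSectionVars false in
lemma aux_inv_one_add_norm_le (Δ : Matrix n n ℝ) (h : ‖Δ‖ < 1) :
    ‖(1 + Δ)⁻¹‖ ≤ (1 - ‖Δ‖)⁻¹ := by
  haveI : CompleteSpace (Matrix n n ℝ) := FiniteDimensional.complete ℝ _
  have hn : ‖-Δ‖ < 1 := by rwa [norm_neg]
  have hu : (1 + Δ) = ((Units.oneSub (-Δ) hn : (Matrix n n ℝ)ˣ) : Matrix n n ℝ) := by
    rw [Units.val_oneSub, sub_neg_eq_add]
  rw [hu, ← Matrix.coe_units_inv]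
  have hval : (((Units.oneSub (-Δ) hn)⁻¹ : (Matrix n n ℝ)ˣ) : Matrix n n ℝ)
      = ∑' k : ℕ, (-Δ) ^ k := rfl
  rw [hval]
  have h1 : ‖(1 : Matrix n n ℝ)‖ ≤ 1 := by
    rw [Matrix.cstar_norm_def, _root_.map_one]
    exact ContinuousLinearMap.norm_id_le
  have hle : ∀ k : ℕ, ‖(-Δ) ^ k‖ ≤ ‖Δ‖ ^ k := by
    intro k
    rcases Nat.eq_zero_or_pos k with rfl | hk
    · simpa using h1
    · simpa [norm_neg] using norm_pow_le' (-Δ) hk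
  have hgs : Summable fun k : ℕ => ‖Δ‖ ^ k :=
    summable_geometric_of_lt_one (norm_nonneg _) h
  have hs : Summable fun k : ℕ => ‖(-Δ) ^ k‖ :=
    Summable.of_nonneg_of_le (fun k => norm_nonneg _) hle hgs
  calc ‖∑' k : ℕ, (-Δ) ^ k‖ ≤ ∑' k : ℕ, ‖(-Δ) ^ k‖ := norm_tsum_le_tsum_norm hs
    _ ≤ ∑' k : ℕ, ‖Δ‖ ^ k := Summable.tsum_le_tsum hle hs hgs
    _ = (1 - ‖Δ‖)⁻¹ := tsum_geometric_of_lt_one (norm_nonneg _) h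

end Aux

set_option maxHeartbeats 1000000 in
/-- Operator-norm bound for the ridge variance matrix: with
`Δ = Σ_λ^{-1/2}(Σ̂ - Σ)Σ_λ^{-1/2}`, `‖Δ‖ < 1`, `(1/n)AAᵀ = Σ̂`, and
`M = (1/n²)Aᵀ Σ̂_λ⁻¹ Σ Σ̂_λ⁻¹ A`, one has `‖M‖ ≤ 1/(n(1 - ‖Δ‖))`. -/
theorem stmt9 {d n : ℕ} (hn : 0 < n)
    (S Sh : Matrix (Fin d) (Fin d) ℝ) (hS : S.PosSemidef) (hSh : Sh.PosSemidef)
    (lam : ℝ) (hlam : 0 < lam)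
    (Sl Shl : Matrix (Fin d) (Fin d) ℝ)
    (hSl : Sl = S + lam • 1) (hShl : Shl = Sh + lam • 1)
    (hSlpsd : Sl.PosSemidef)
    (Δ : Matrix (Fin d) (Fin d) ℝ)
    (hΔdef : Δ = hSlpsd.sqrt⁻¹ * (Sh - S) * hSlpsd.sqrt⁻¹)
    (hΔ : matSpectralNorm Δ < 1)
    (A : Matrix (Fin d) (Fin n) ℝ) (hA : (n : ℝ)⁻¹ • (A * Aᵀ) = Sh)
    (M : Matrix (Fin n) (Fin n) ℝ)
    (hM : M = ((n : ℝ) ^ 2)⁻¹ • (Aᵀ * Shl⁻¹ * S * Shl⁻¹ * A)) :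
    matSpectralNorm M ≤ 1 / (n * (1 - matSpectralNorm Δ)) := by
  classical
  haveI : CompleteSpace (Matrix (Fin d) (Fin d) ℝ) := FiniteDimensional.complete ℝ _
  have hΔ' : ‖Δ‖ < 1 := by rw [Matrix.cstar_norm_def]; exact hΔ
  have hn0 : (n : ℝ) ≠ 0 := Nat.cast_ne_zero.mpr hn.ne'
  have hΔpos : 0 < 1 - ‖Δ‖ := by
    have := norm_nonneg Δ; linarith
  -- positive definiteness
  have hlam1 : (lam • (1 : Matrix (Fin d) (Fin d) ℝ)).PosDef := by
    rw [Matrix.smul_one_eq_diagonal]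
    exact Matrix.PosDef.diagonal fun _ => hlam
  have hSlpd : Sl.PosDef := hSl ▸ Matrix.PosDef.posSemidef_add hS hlam1
  have hShlpd : Shl.PosDef := hShl ▸ Matrix.PosDef.posSemidef_add hSh hlam1
  -- square roots
  set W := hSlpsd.sqrt with hWdef
  have hWh : Wᴴ = W := hSlpsd.posSemidef_sqrt.isHermitian
  have hWW : W * W = Sl := hSlpsd.sqrt_mul_self
  have hWdetu : IsUnit W.det := by
    have hdet : W.det * W.det = Sl.det := by rw [← Matrix.det_mul, hWW]
    exact isUnit_of_mul_isUnit_left (hdet ▸ hSlpd.det_pos.ne'.isUnit)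
  have hW1 : W⁻¹ * W = 1 := Matrix.nonsing_inv_mul W hWdetu
  have hW2 : W * W⁻¹ = 1 := Matrix.mul_nonsing_inv W hWdetu
  have hWih : (W⁻¹)ᴴ = W⁻¹ := by rw [Matrix.conjTranspose_nonsing_inv, hWh]
  set T := hShlpd.posSemidef.sqrt with hTdef
  have hTh : Tᴴ = T := hShlpd.posSemidef.posSemidef_sqrt.isHermitian
  have hTT : T * T = Shl := hShlpd.posSemidef.sqrt_mul_self
  have hTdetu : IsUnit T.det := by
    have hdet : T.det * T.det = Shl.det := by rw [← Matrix.det_mul, hTT]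
    exact isUnit_of_mul_isUnit_left (hdet ▸ hShlpd.det_pos.ne'.isUnit)
  have hT1 : T⁻¹ * T = 1 := Matrix.nonsing_inv_mul T hTdetu
  have hT2 : T * T⁻¹ = 1 := Matrix.mul_nonsing_inv T hTdetu
  have hTih : (T⁻¹)ᴴ = T⁻¹ := by rw [Matrix.conjTranspose_nonsing_inv, hTh]
  have hShldetu : IsUnit Shl.det := hShlpd.det_pos.ne'.isUnit
  have hShli1 : Shl⁻¹ * Shl = 1 := Matrix.nonsing_inv_mul _ hShldetu
  have hShlih : (Shl⁻¹)ᴴ = Shl⁻¹ := by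
    rw [Matrix.conjTranspose_nonsing_inv, hShlpd.isHermitian.eq]
  set G := hS.sqrt with hGdef
  have hGh : Gᴴ = G := hS.posSemidef_sqrt.isHermitian
  have hGG : G * G = S := hS.sqrt_mul_self
  -- key identities
  have hWΔW : W * Δ * W = Sh - S := by
    rw [hΔdef]
    calc W * (W⁻¹ * (Sh - S) * W⁻¹) * W
        = (W * W⁻¹) * ((Sh - S) * (W⁻¹ * W)) := by simp only [Matrix.mul_assoc]
      _ = (W * W⁻¹) * (Sh - S) * (W⁻¹ * W) := by simp only [Matrix.mul_assoc]
      _ = Sh - S := by rw [hW2, hW1, Matrix.one_mul, Matrix.mul_one]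
  have key1 : Shl = W * (1 + Δ) * W := by
    have he : W * (1 + Δ) * W = W * W + W * Δ * W := by
      rw [Matrix.mul_add, Matrix.mul_one, Matrix.add_mul]
    rw [he, hWW, hWΔW, hShl, hSl]
    abel
  have key2 : W * Shl⁻¹ * W = (1 + Δ)⁻¹ := by
    have h3 : Shl⁻¹ = W⁻¹ * ((1 + Δ)⁻¹ * W⁻¹) := by
      rw [key1, Matrix.mul_inv_rev, Matrix.mul_inv_rev]
    rw [h3]
    calc W * (W⁻¹ * ((1 + Δ)⁻¹ * W⁻¹)) * W
        = (W * W⁻¹) * ((1 + Δ)⁻¹ * (W⁻¹ * W)) := by simp only [Matrix.mul_assoc]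
      _ = (W * W⁻¹) * (1 + Δ)⁻¹ * (W⁻¹ * W) := by simp only [Matrix.mul_assoc]
      _ = (1 + Δ)⁻¹ := by rw [hW2, hW1, Matrix.one_mul, Matrix.mul_one]
  -- the matrix C
  set C := G * Shl⁻¹ * A with hCdef
  have hM2 : M = ((n : ℝ) ^ 2)⁻¹ • (Cᴴ * C) := by
    rw [hM]
    congr 1
    rw [← hGG, ← Matrix.conjTranspose_eq_transpose_of_trivial, hCdef]
    simp only [Matrix.conjTranspose_mul, hShlih, hGh, Matrix.mul_assoc]
  have hnormM : ‖M‖ = ((n : ℝ) ^ 2)⁻¹ * (‖C‖ * ‖C‖) := by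
    rw [hM2, norm_smul, Matrix.l2_opNorm_conjTranspose_mul_self, Real.norm_eq_abs,
      abs_of_nonneg (by positivity)]
  -- factorization
  set X := W * Shl⁻¹ * T with hXdef
  set Y := T⁻¹ * A with hYdef
  have hCfac : C = (G * W⁻¹) * (X * Y) := by
    rw [hXdef, hYdef, hCdef]
    have he : (G * W⁻¹) * ((W * Shl⁻¹ * T) * (T⁻¹ * A))
        = G * ((W⁻¹ * W) * (Shl⁻¹ * ((T * T⁻¹) * A))) := by simp only [Matrix.mul_assoc]
    rw [he, hW1, hT2, Matrix.one_mul, Matrix.one_mul, ← Matrix.mul_assoc]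
  -- bound 1 : ‖G * W⁻¹‖ ≤ 1
  have hconj1 : (G * W⁻¹)ᴴ * (G * W⁻¹) = W⁻¹ * S * W⁻¹ := by
    rw [Matrix.conjTranspose_mul, hWih, hGh]
    calc W⁻¹ * G * (G * W⁻¹) = W⁻¹ * (G * G) * W⁻¹ := by simp only [Matrix.mul_assoc]
      _ = W⁻¹ * S * W⁻¹ := by rw [hGG]
  have hWSlW : W⁻¹ * Sl * W⁻¹ = 1 := by
    rw [← hWW]
    calc W⁻¹ * (W * W) * W⁻¹ = (W⁻¹ * W) * (W * W⁻¹) := by simp only [Matrix.mul_assoc]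
      _ = 1 := by rw [hW1, hW2, Matrix.one_mul]
  have hSlS : Sl - S = lam • (1 : Matrix (Fin d) (Fin d) ℝ) := by rw [hSl]; abel
  have b1 : ‖G * W⁻¹‖ ≤ 1 := by
    have hpsd : ((1 : ℝ) • (1 : Matrix (Fin d) (Fin d) ℝ) - (G * W⁻¹)ᴴ * (G * W⁻¹)).PosSemidef := by
      have heq : (1 : ℝ) • (1 : Matrix (Fin d) (Fin d) ℝ) - (G * W⁻¹)ᴴ * (G * W⁻¹)
          = W⁻¹ * (lam • (1 : Matrix (Fin d) (Fin d) ℝ)) * W⁻¹ := by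
        rw [hconj1, ← hSlS, one_smul, ← hWSlW, Matrix.mul_sub, Matrix.sub_mul]
      rw [heq]
      have := hlam1.posSemidef.mul_mul_conjTranspose_same W⁻¹
      rwa [hWih] at this
    have := aux_norm_le_sqrt (G * W⁻¹) 1 zero_le_one hpsd
    rwa [Real.sqrt_one] at this
  -- bound 2 : ‖X‖² ≤ (1 - ‖Δ‖)⁻¹
  have hXX : X * Xᴴ = (1 + Δ)⁻¹ := by
    have hXh : Xᴴ = T * (Shl⁻¹ * W) := by
      rw [hXdef]
      simp only [Matrix.conjTranspose_mul, hShlih, hWh, hTh, Matrix.mul_assoc]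
    rw [hXh, hXdef]
    have e1 : W * Shl⁻¹ * T * (T * (Shl⁻¹ * W)) = W * (Shl⁻¹ * (T * T) * Shl⁻¹) * W := by
      simp only [Matrix.mul_assoc]
    rw [e1, hTT]
    have e2 : Shl⁻¹ * Shl * Shl⁻¹ = Shl⁻¹ := by rw [hShli1, Matrix.one_mul]
    rw [e2]
    exact key2
  have b2 : ‖X‖ * ‖X‖ ≤ (1 - ‖Δ‖)⁻¹ := by
    rw [← aux_self_mul_conjTranspose X, hXX]
    exact aux_inv_one_add_norm_le Δ hΔ'
  -- bound 3 : ‖Y‖² ≤ n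
  have hAAT : A * Aᵀ = (n : ℝ) • Sh := by
    rw [← hA, smul_smul, mul_inv_cancel₀ hn0, one_smul]
  have hYY : Y * Yᴴ = (n : ℝ) • (T⁻¹ * Sh * T⁻¹) := by
    have hYh : Yᴴ = Aᴴ * T⁻¹ := by rw [hYdef, Matrix.conjTranspose_mul, hTih]
    rw [hYh, hYdef]
    have e1 : T⁻¹ * A * (Aᴴ * T⁻¹) = T⁻¹ * (A * Aᴴ) * T⁻¹ := by
      simp only [Matrix.mul_assoc]
    rw [e1, Matrix.conjTranspose_eq_transpose_of_trivial, hAAT, mul_smul_comm,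
      smul_mul_assoc]
  have hTShlT : T⁻¹ * Shl * T⁻¹ = 1 := by
    rw [← hTT]
    calc T⁻¹ * (T * T) * T⁻¹ = (T⁻¹ * T) * (T * T⁻¹) := by simp only [Matrix.mul_assoc]
      _ = 1 := by rw [hT1, hT2, Matrix.one_mul]
  have hShlSh : Shl - Sh = lam • (1 : Matrix (Fin d) (Fin d) ℝ) := by rw [hShl]; abel
  have hTShT : ‖T⁻¹ * Sh * T⁻¹‖ ≤ 1 := by
    have hpsd0 : (T⁻¹ * Sh * T⁻¹).PosSemidef := by
      have := hSh.mul_mul_conjTranspose_same T⁻¹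
      rwa [hTih] at this
    apply aux_psd_norm_le hpsd0 zero_le_one
    have heq : (1 : ℝ) • (1 : Matrix (Fin d) (Fin d) ℝ) - T⁻¹ * Sh * T⁻¹
        = T⁻¹ * (lam • (1 : Matrix (Fin d) (Fin d) ℝ)) * T⁻¹ := by
      rw [← hShlSh, one_smul, ← hTShlT, Matrix.mul_sub, Matrix.sub_mul]
    rw [heq]
    have := hlam1.posSemidef.mul_mul_conjTranspose_same T⁻¹
    rwa [hTih] at this
  have b3 : ‖Y‖ * ‖Y‖ ≤ (n : ℝ) := by
    rw [← aux_self_mul_conjTranspose Y, hYY, norm_smul, Real.norm_eq_abs,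
      abs_of_nonneg (Nat.cast_nonneg n)]
    calc (n : ℝ) * ‖T⁻¹ * Sh * T⁻¹‖ ≤ (n : ℝ) * 1 :=
          mul_le_mul_of_nonneg_left hTShT (Nat.cast_nonneg n)
      _ = (n : ℝ) := mul_one _
  -- combine
  have hCle : ‖C‖ ≤ ‖G * W⁻¹‖ * (‖X‖ * ‖Y‖) := by
    rw [hCfac]
    refine (Matrix.l2_opNorm_mul _ _).trans ?_
    exact mul_le_mul_of_nonneg_left (Matrix.l2_opNorm_mul _ _) (norm_nonneg _)
  have hinvnn : (0 : ℝ) ≤ (1 - ‖Δ‖)⁻¹ := inv_nonneg.mpr hΔpos.le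
  have hC2 : ‖C‖ * ‖C‖ ≤ (1 - ‖Δ‖)⁻¹ * (n : ℝ) := by
    have h0 : (0 : ℝ) ≤ ‖G * W⁻¹‖ * (‖X‖ * ‖Y‖) :=
      mul_nonneg (norm_nonneg _) (mul_nonneg (norm_nonneg _) (norm_nonneg _))
    calc ‖C‖ * ‖C‖
        ≤ (‖G * W⁻¹‖ * (‖X‖ * ‖Y‖)) * (‖G * W⁻¹‖ * (‖X‖ * ‖Y‖)) :=
          mul_le_mul hCle hCle (norm_nonneg _) h0
      _ = (‖G * W⁻¹‖ * ‖G * W⁻¹‖) * ((‖X‖ * ‖X‖) * (‖Y‖ * ‖Y‖)) := by ring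
      _ ≤ 1 * ((1 - ‖Δ‖)⁻¹ * (n : ℝ)) := by
          apply mul_le_mul
          · calc ‖G * W⁻¹‖ * ‖G * W⁻¹‖ ≤ 1 * 1 :=
                  mul_le_mul b1 b1 (norm_nonneg _) zero_le_one
              _ = 1 := one_mul 1
          · exact mul_le_mul b2 b3 (mul_nonneg (norm_nonneg _) (norm_nonneg _)) hinvnn
          · exact mul_nonneg (mul_nonneg (norm_nonneg _) (norm_nonneg _))
              (mul_nonneg (norm_nonneg _) (norm_nonneg _))
          · exact zero_le_one
      _ = (1 - ‖Δ‖)⁻¹ * (n : ℝ) := one_mul _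
  show ‖M‖ ≤ 1 / (n * (1 - ‖Δ‖))
  calc ‖M‖ = ((n : ℝ) ^ 2)⁻¹ * (‖C‖ * ‖C‖) := hnormM
    _ ≤ ((n : ℝ) ^ 2)⁻¹ * ((1 - ‖Δ‖)⁻¹ * (n : ℝ)) :=
        mul_le_mul_of_nonneg_left hC2 (by positivity)
    _ = 1 / (n * (1 - ‖Δ‖)) := by
        field_simp
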